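/- arXiv:1503.05420 — 4 statements merged into one kernel-verified Lean document; each statement's English description precedes it below -/
import Mathlib

section
/- Let S = ℂ[x_0, …, x_n], let I ⊆ S be a homogeneous ideal, let d ≥ 2 be an integer and set c = h_I(d). Then for every integer k with 0 ≤ k ≤ d: (a) if c ≤ d then h_I(k) ≥ min(c, k+1); (b) if d+1 ≤ c ≤ 2d then h_I(k) ≥ min(k + (c−d), 2k+1); (c) if c = 2d+1 then h_I(k) ≥ 2k+1. -/
open MvPolynomial

/-- An ideal of `ℂ[x_0,…,x_n]` is homogeneous if it contains all homogeneous
components of its elements. -/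
def IsHomogeneousIdeal {n : ℕ} (I : Ideal (MvPolynomial (Fin (n + 1)) ℂ)) : Prop :=
  ∀ f ∈ I, ∀ k : ℕ, homogeneousComponent k f ∈ I

/-- The Hilbert function of an ideal `I ⊆ ℂ[x_0,…,x_n]`:
`h_I(k) = dim S_k - dim (I ∩ S_k)`. -/
noncomputable def hilbertFn {n : ℕ} (I : Ideal (MvPolynomial (Fin (n + 1)) ℂ))
    (k : ℕ) : ℕ :=
  Module.finrank ℂ (homogeneousSubmodule (Fin (n + 1)) ℂ k) -
    Module.finrank ℂ
      (Submodule.restrictScalars ℂ I ⊓ homogeneousSubmodule (Fin (n + 1)) ℂ k :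
        Submodule ℂ (MvPolynomial (Fin (n + 1)) ℂ))

/-!
Fix a monomial order. A subspace of polynomials has as many distinct leading monomials as its
dimension, so `h_I(k)` counts the standard monomials of degree `k`: those that are not the leading
monomial of a nonzero element of `I_k`. If `f ∈ I_k` has leading monomial `μ` then `x_i f ∈ I_{k+1}`
has leading monomial `μ x_i`, so the shadow of the standard monomials of degree `k + 1` consists
of standard monomials of degree `k`.

A set `L` of monomials of degree `d` has a shadow of size at least `min(|L|, d)` and at least
`min(|L| - 1, 2d - 1)`. Both bounds follow by induction, splitting `L` along a variable `x_t` into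
its `x_t`-free part `L₀` and `L : x_t = {μ | μ x_t ∈ L}`: the shadow of `L` contains the disjoint
sets `x_t · ∂(L : x_t)` and `∂L₀`, and it contains `L : x_t` itself. Running the two bounds down
from degree `d` gives (a), (b) and (c).
-/

open Module Finset Finsupp

namespace MonomialOrder

variable {σ R K : Type*} (m : MonomialOrder σ)

def leadingMonomials [CommSemiring R] (W : Submodule R (MvPolynomial σ R)) : Set (σ →₀ ℕ) :=
  {μ | ∃ f ∈ W, f ≠ 0 ∧ m.degree f = μ}

variable {m}

theorem leadingMonomials_mono [CommSemiring R] {W W' : Submodule R (MvPolynomial σ R)}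
    (h : W ≤ W') : m.leadingMonomials W ⊆ m.leadingMonomials W' :=
  fun _ ⟨f, hf, hf0, hμ⟩ => ⟨f, h hf, hf0, hμ⟩

theorem linearIndependent_of_injective_degree [CommRing R] [NoZeroDivisors R] {ι : Type*}
    {g : ι → MvPolynomial σ R} (hg : ∀ i, g i ≠ 0) (hinj : (m.degree ∘ g).Injective) :
    LinearIndependent R g := by
  classical
  rw [linearIndependent_iff']
  intro s c hsum i hi
  by_contra hci
  obtain ⟨j, hj, hmax⟩ := {l ∈ s | c l ≠ 0}.exists_max_image (fun l => m.toSyn (m.degree (g l)))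
    ⟨i, mem_filter.2 ⟨hi, hci⟩⟩
  obtain ⟨hjs, hcj⟩ := mem_filter.1 hj
  have htop : (∑ l ∈ s, c l • g l).coeff (m.degree (g j)) = c j * m.leadingCoeff (g j) := by
    rw [coeff_sum, sum_eq_single j _ (fun h => absurd hjs h), coeff_smul, smul_eq_mul,
      leadingCoeff]
    intro l hl hlj
    by_cases hcl : c l = 0
    · simp [hcl]
    have hlt : m.degree (g l) ≺[m] m.degree (g j) :=
      (hmax l (mem_filter.2 ⟨hl, hcl⟩)).lt_of_ne fun h => hlj (hinj (m.toSyn.injective h))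
    rw [coeff_smul, m.coeff_eq_zero_of_lt hlt, smul_zero]
  rw [hsum, coeff_zero] at htop
  exact mul_ne_zero hcj (m.leadingCoeff_ne_zero_iff.2 (hg j)) htop.symm

variable [Field K] {W : Submodule K (MvPolynomial σ K)} {Λ : Finset (σ →₀ ℕ)}

theorem injective_coeffs_of_leadingMonomials_subset (hΛ : m.leadingMonomials W ⊆ Λ) :
    Function.Injective (LinearMap.pi fun μ : Λ => lcoeff K μ.1 ∘ₗ W.subtype) := by
  rw [← LinearMap.ker_eq_bot, eq_bot_iff]
  intro f hf
  by_contra hf0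
  have hf0' : (f : MvPolynomial σ K) ≠ 0 := by simpa using hf0
  exact m.leadingCoeff_ne_zero_iff.2 hf0' (congrFun hf ⟨_, hΛ ⟨f, f.2, hf0', rfl⟩⟩)

theorem finrank_eq_card_of_coe_eq_leadingMonomials
    (hΛ : (Λ : Set (σ →₀ ℕ)) = m.leadingMonomials W) : finrank K W = #Λ := by
  have hinj := injective_coeffs_of_leadingMonomials_subset hΛ.ge
  have : FiniteDimensional K W := Module.Finite.of_injective _ hinj
  refine le_antisymm ?_ ?_
  · simpa using LinearMap.finrank_le_finrank_of_injective hinj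
  · have hmem (μ : Λ) : μ.1 ∈ m.leadingMonomials W := hΛ ▸ μ.2
    choose g hgW hg0 hdeg using hmem
    have hli : LinearIndependent K (fun μ => (⟨g μ, hgW μ⟩ : W)) :=
      .of_comp W.subtype <| m.linearIndependent_of_injective_degree hg0 fun μ ν h =>
        Subtype.ext (by simpa [hdeg] using h)
    simpa using hli.fintype_card_le_finrank

end MonomialOrder

section Shadow

variable {σ : Type*}

/-- The monomial colon set `L : x_t`. -/
noncomputable def divByVar (t : σ) (L : Finset (σ →₀ ℕ)) : Finset (σ →₀ ℕ) :=
  L.preimage (· + single t 1) (add_left_injective _).injOn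

variable {L : Finset (σ →₀ ℕ)} {t : σ}

@[simp]
theorem mem_divByVar {μ : σ →₀ ℕ} : μ ∈ divByVar t L ↔ μ + single t 1 ∈ L :=
  mem_preimage

theorem exists_add_single_eq_of_ne_zero {m : σ →₀ ℕ} (h : m t ≠ 0) : ∃ μ, μ + single t 1 = m :=
  ⟨m - single t 1, tsub_add_cancel_of_le (single_le_iff.2 (Nat.one_le_iff_ne_zero.2 h))⟩

theorem degree_of_mem_divByVar {d : ℕ} (hL : ∀ m ∈ L, m.degree = d + 1) :
    ∀ μ ∈ divByVar t L, μ.degree = d := by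
  intro μ hμ
  have := hL _ (mem_divByVar.1 hμ)
  rw [map_add, degree_single] at this
  omega

theorem exists_divByVar_nonempty {d : ℕ} (hL : ∀ m ∈ L, m.degree = d + 1) (hne : L.Nonempty) :
    ∃ t, (divByVar t L).Nonempty := by
  obtain ⟨m, hm⟩ := hne
  obtain ⟨t, ht⟩ : ∃ t, m t ≠ 0 := by
    by_contra! h
    simpa [show m = 0 from Finsupp.ext h] using hL m hm
  obtain ⟨μ, rfl⟩ := exists_add_single_eq_of_ne_zero ht
  exact ⟨t, μ, mem_divByVar.2 hm⟩

variable [DecidableEq σ]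

noncomputable def monomialShadow (L : Finset (σ →₀ ℕ)) : Finset (σ →₀ ℕ) :=
  L.biUnion fun m => m.support.image fun i => m - single i 1

theorem mem_monomialShadow {μ : σ →₀ ℕ} :
    μ ∈ monomialShadow L ↔ ∃ i, μ + single i 1 ∈ L := by
  simp only [monomialShadow, mem_biUnion, mem_image, Finsupp.mem_support_iff]
  constructor
  · rintro ⟨m, hm, i, hi, rfl⟩
    obtain ⟨μ, rfl⟩ := exists_add_single_eq_of_ne_zero hi
    exact ⟨i, by simpa using hm⟩
  · rintro ⟨i, hi⟩
    exact ⟨_, hi, i, by simp, add_tsub_cancel_right μ _⟩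

theorem divByVar_subset_monomialShadow : divByVar t L ⊆ monomialShadow L :=
  fun _ hμ => mem_monomialShadow.2 ⟨t, mem_divByVar.1 hμ⟩

theorem card_filter_add_card_divByVar : #{m ∈ L | m t = 0} + #(divByVar t L) = #L := by
  have himage : (divByVar t L).image (· + single t 1) = {m ∈ L | m t ≠ 0} := by
    ext m
    simp only [mem_image, mem_divByVar, mem_filter]
    constructor
    · rintro ⟨μ, hμ, rfl⟩
      exact ⟨hμ, by simp⟩
    · rintro ⟨hm, hmt⟩
      obtain ⟨μ, rfl⟩ := exists_add_single_eq_of_ne_zero hmt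
      exact ⟨μ, hm, rfl⟩
  rw [← card_image_of_injective (divByVar t L) (add_left_injective (single t 1)), himage,
    card_filter_add_card_filter_not]

theorem card_monomialShadow_divByVar_add_le :
    #(monomialShadow (divByVar t L)) + #(monomialShadow {m ∈ L | m t = 0})
      ≤ #(monomialShadow L) := by
  rw [← card_image_of_injective _ (add_left_injective (single t 1)), ← card_union_of_disjoint]
  · refine card_le_card (union_subset ?_ ?_)
    · intro ν hν
      obtain ⟨μ, hμ, rfl⟩ := mem_image.1 hν
      obtain ⟨i, hi⟩ := mem_monomialShadow.1 hμ
      exact mem_monomialShadow.2 ⟨i, by rw [add_right_comm]; exact mem_divByVar.1 hi⟩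
    · intro μ hμ
      obtain ⟨i, hi⟩ := mem_monomialShadow.1 hμ
      exact mem_monomialShadow.2 ⟨i, (mem_filter.1 hi).1⟩
  · rw [disjoint_left]
    intro ν hν hν'
    obtain ⟨μ, -, rfl⟩ := mem_image.1 hν
    obtain ⟨i, hi⟩ := mem_monomialShadow.1 hν'
    simpa using (mem_filter.1 hi).2

theorem min_card_le_card_monomialShadow {d : ℕ} {L : Finset (σ →₀ ℕ)}
    (hL : ∀ m ∈ L, m.degree = d) : min #L d ≤ #(monomialShadow L) := by
  obtain rfl | ⟨d, rfl⟩ : d = 0 ∨ ∃ d', d = d' + 1 := by cases d <;> simp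
  · simp
  obtain rfl | hne := L.eq_empty_or_nonempty
  · simp
  obtain ⟨t, hpos⟩ := exists_divByVar_nonempty hL hne
  have := hpos.card_pos
  have := card_filter_add_card_divByVar (L := L) (t := t)
  have hM := min_card_le_card_monomialShadow (degree_of_mem_divByVar hL (t := t))
  have hL₀ := min_card_le_card_monomialShadow (L := {m ∈ L | m t = 0})
    fun m hm => hL m (mem_filter.1 hm).1
  have := card_le_card (divByVar_subset_monomialShadow (L := L) (t := t))
  have := card_monomialShadow_divByVar_add_le (L := L) (t := t)
  omega
termination_by d + #L

theorem min_card_sub_one_le_card_monomialShadow {d : ℕ} {L : Finset (σ →₀ ℕ)}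
    (hL : ∀ m ∈ L, m.degree = d) : min (#L - 1) (2 * d - 1) ≤ #(monomialShadow L) := by
  obtain rfl | ⟨d, rfl⟩ : d = 0 ∨ ∃ d', d = d' + 1 := by cases d <;> simp
  · simp
  obtain rfl | hne := L.eq_empty_or_nonempty
  · simp
  obtain ⟨t, hpos⟩ := exists_divByVar_nonempty hL hne
  have := hpos.card_pos
  have := card_filter_add_card_divByVar (L := L) (t := t)
  have hMdeg := degree_of_mem_divByVar hL (t := t)
  have hL₀deg : ∀ m ∈ {m ∈ L | m t = 0}, m.degree = d + 1 := fun m hm => hL m (mem_filter.1 hm).1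
  have hM := min_card_sub_one_le_card_monomialShadow hMdeg
  have hL₀ := min_card_sub_one_le_card_monomialShadow hL₀deg
  have hM' := min_card_le_card_monomialShadow hMdeg
  have hL₀' := min_card_le_card_monomialShadow hL₀deg
  have := card_le_card (divByVar_subset_monomialShadow (L := L) (t := t))
  have := card_monomialShadow_divByVar_add_le (L := L) (t := t)
  omega
termination_by d + #L

end Shadow

section StandardMonomials

open MonomialOrder

variable {σ K : Type*} [Field K]

open Classical in
noncomputable def standardMonomials [Finite σ] (m : MonomialOrder σ)
    (I : Ideal (MvPolynomial σ K)) (k : ℕ) : Finset (σ →₀ ℕ) :=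
  {μ ∈ (finite_of_degree_eq k).toFinset |
    μ ∉ m.leadingMonomials (I.restrictScalars K ⊓ homogeneousSubmodule σ K k)}

variable (m : MonomialOrder σ)

theorem leadingMonomials_homogeneousSubmodule (k : ℕ) :
    m.leadingMonomials (homogeneousSubmodule σ K k) = {μ | μ.degree = k} := by
  ext μ
  constructor
  · rintro ⟨f, hf, hf0, rfl⟩
    have := (mem_homogeneousSubmodule _ _).1 hf
      (MvPolynomial.mem_support_iff.1 (m.degree_mem_support hf0))
    simpa [degree_eq_weight_one, Pi.one_def] using this
  · intro hμ
    classical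
    exact ⟨monomial μ 1, (mem_homogeneousSubmodule _ _).2 (isHomogeneous_monomial 1 hμ),
      by simp, by simp [m.degree_monomial]⟩

variable [Finite σ] {m}

theorem mem_standardMonomials {I : Ideal (MvPolynomial σ K)} {k : ℕ} {μ : σ →₀ ℕ} :
    μ ∈ standardMonomials m I k ↔
      μ.degree = k ∧ μ ∉ m.leadingMonomials (I.restrictScalars K ⊓ homogeneousSubmodule σ K k) := by
  simp only [standardMonomials, mem_filter, Set.Finite.mem_toFinset, Set.mem_ofPred_eq]

variable (m) (I : Ideal (MvPolynomial σ K)) (k : ℕ)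

theorem finrank_sub_finrank_eq_card_standardMonomials :
    finrank K (homogeneousSubmodule σ K k)
      - finrank K (I.restrictScalars K ⊓ homogeneousSubmodule σ K k : Submodule K _)
      = #(standardMonomials m I k) := by
  classical
  let T := (finite_of_degree_eq (σ := σ) k).toFinset
  let LM := m.leadingMonomials (I.restrictScalars K ⊓ homogeneousSubmodule σ K k)
  have hT : (T : Set (σ →₀ ℕ)) = m.leadingMonomials (homogeneousSubmodule σ K k) := by
    simp [T, leadingMonomials_homogeneousSubmodule]
  have hLM : (({μ ∈ T | μ ∈ LM} : Finset _) : Set (σ →₀ ℕ)) = LM := by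
    ext μ
    simp only [coe_filter, Set.mem_ofPred_eq, and_iff_right_iff_imp]
    intro h
    rw [← mem_coe, hT]
    exact leadingMonomials_mono inf_le_right h
  rw [finrank_eq_card_of_coe_eq_leadingMonomials hT, finrank_eq_card_of_coe_eq_leadingMonomials hLM,
    ← card_filter_add_card_filter_not (s := T) (· ∈ LM), Nat.add_sub_cancel_left]
  rfl

variable [DecidableEq σ]

theorem monomialShadow_standardMonomials_succ_subset :
    monomialShadow (standardMonomials m I (k + 1)) ⊆ standardMonomials m I k := by
  intro μ hμ
  obtain ⟨i, hi⟩ := mem_monomialShadow.1 hμ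
  rw [mem_standardMonomials, map_add, degree_single] at hi
  rw [mem_standardMonomials]
  refine ⟨by omega, fun ⟨f, ⟨hfI, hfk⟩, hf0, hfμ⟩ => hi.2 ⟨X i * f, ⟨?_, ?_⟩, ?_, ?_⟩⟩
  · exact I.mul_mem_left _ hfI
  · rw [SetLike.mem_coe, mem_homogeneousSubmodule, add_comm]
    exact (isHomogeneous_X K i).mul hfk
  · exact mul_ne_zero (X_ne_zero i) hf0
  · rw [m.degree_mul (X_ne_zero i) hf0, m.degree_X, hfμ, add_comm]

theorem min_card_standardMonomials_succ_le :
    min #(standardMonomials m I (k + 1)) (k + 1) ≤ #(standardMonomials m I k) :=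
  (min_card_le_card_monomialShadow fun _ hμ => (mem_standardMonomials.1 hμ).1).trans
    (card_le_card (monomialShadow_standardMonomials_succ_subset m I k))

theorem min_card_standardMonomials_succ_sub_one_le :
    min (#(standardMonomials m I (k + 1)) - 1) (2 * k + 1) ≤ #(standardMonomials m I k) :=
  (min_card_sub_one_le_card_monomialShadow fun _ hμ => (mem_standardMonomials.1 hμ).1).trans
    (card_le_card (monomialShadow_standardMonomials_succ_subset m I k))

end StandardMonomials

theorem min_le_of_forall_min_succ_le {h : ℕ → ℕ} (step : ∀ k, min (h (k + 1)) (k + 1) ≤ h k)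
    {k d : ℕ} (hk : k ≤ d) : min (h d) (k + 1) ≤ h k := by
  induction d, hk using Nat.le_induction with
  | base => omega
  | succ d _ ih => have := step d; omega

theorem min_sub_le_of_forall_min_pred_succ_le {h : ℕ → ℕ}
    (step : ∀ k, min (h (k + 1) - 1) (2 * k + 1) ≤ h k) {k d : ℕ} (hk : k ≤ d) :
    min (h d - (d - k)) (2 * k + 1) ≤ h k := by
  induction d, hk using Nat.le_induction with
  | base => omega
  | succ d _ ih => have := step d; omega

theorem hilbert_fn_low_degree_bounds_general (n d : ℕ)
    (I : Ideal (MvPolynomial (Fin (n + 1)) ℂ))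
    (c : ℕ) (hc : c = hilbertFn I d) :
    ∀ k : ℕ, k ≤ d →
      (c ≤ d → hilbertFn I k ≥ min c (k + 1)) ∧
      (d + 1 ≤ c → c ≤ 2 * d → hilbertFn I k ≥ min (k + (c - d)) (2 * k + 1)) ∧
      (c = 2 * d + 1 → hilbertFn I k ≥ 2 * k + 1) := by
  intro k hk
  have hN (j : ℕ) : hilbertFn I j = #(standardMonomials MonomialOrder.lex I j) :=
    finrank_sub_finrank_eq_card_standardMonomials _ I j
  have hA := min_le_of_forall_min_succ_le (h := hilbertFn I)
    (fun j => by simpa only [hN] using min_card_standardMonomials_succ_le _ I j) hk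
  have hB := min_sub_le_of_forall_min_pred_succ_le (h := hilbertFn I)
    (fun j => by simpa only [hN] using min_card_standardMonomials_succ_sub_one_le _ I j) hk
  subst hc
  exact ⟨fun _ => hA, fun _ _ => by omega, fun _ => by omega⟩

/-- Let `I ⊆ ℂ[x_0,…,x_n]` be a homogeneous ideal, `d ≥ 2` and `c = h_I(d)`.
Then for `0 ≤ k ≤ d`:
(a) if `c ≤ d` then `h_I(k) ≥ min(c, k+1)`;
(b) if `d+1 ≤ c ≤ 2d` then `h_I(k) ≥ min(k + (c-d), 2k+1)`;
(c) if `c = 2d+1` then `h_I(k) ≥ 2k+1`. -/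
theorem hilbert_fn_low_degree_bounds (n d : ℕ) (hd : 2 ≤ d)
    (I : Ideal (MvPolynomial (Fin (n + 1)) ℂ)) (hI : IsHomogeneousIdeal I)
    (c : ℕ) (hc : c = hilbertFn I d) :
    ∀ k : ℕ, k ≤ d →
      (c ≤ d → hilbertFn I k ≥ min c (k + 1)) ∧
      (d + 1 ≤ c → c ≤ 2 * d → hilbertFn I k ≥ min (k + (c - d)) (2 * k + 1)) ∧
      (c = 2 * d + 1 → hilbertFn I k ≥ 2 * k + 1) :=
  hilbert_fn_low_degree_bounds_general n d I c hc
end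

section
/- Fix an integer d ≥ 1. Let c ≤ c′ be nonnegative integers, let (ε_d, …, ε_1) be the Macaulay expansion of c in base d and let (ε′_d, …, ε′_1) be the Macaulay expansion of c′ in base d. Then all three of the following inequalities hold: Σ_{i=1}^d C(i+ε_i+1, i+1) ≤ Σ_{i=1}^d C(i+ε′_i+1, i+1); Σ_{i=1}^d C(i+ε_i−1, i) ≤ Σ_{i=1}^d C(i+ε′_i−1, i); and Σ_{i=2}^d C(i+ε_i−1, i−1) ≤ Σ_{i=2}^d C(i+ε′_i−1, i−1). In other words, the functions c ↦ c^{⟨d⟩}, c ↦ c_{⟨d⟩} and c ↦ c_{*d} are increasing in c. -/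
/-- `ε` (restricted to indices `1,…,d`) is the Macaulay expansion of `c` in base `d`. -/
def IsMacaulayExpansion (c d : ℕ) (ε : ℕ → ℤ) : Prop :=
  (∀ i, 1 ≤ i → i ≤ d → (-1 : ℤ) ≤ ε i) ∧
  (∀ i j, 1 ≤ i → i ≤ j → j ≤ d → ε i ≤ ε j) ∧
  c = ∑ i ∈ Finset.Icc 1 d, (((i : ℤ) + ε i).toNat).choose i

/-!
Write `c` and the three functions as sums `∑ i ∈ Icc 1 d, g i (ε i)` of monotone `g i` with the
dominance property `∑ i ∈ Icc 1 k, g i e ≤ g k (e + 1)`; for the terms `C(i + e, i)` of `c` itself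
it holds with room `1` to spare. Comparing two expansions at the last index `k` where they differ,
dominance shows that the larger digit at `k` outweighs everything below it. For `c` this forces
`ε k < ε' k` when `c ≤ c'`, and then each function is larger at `ε'`. All dominance inequalities
come from the diagonal hockey stick `∑ i ∈ range (n + 1), C(i + e, i) = C(n + e + 1, n)`.
-/

open Finset

def macaulayTerm (i : ℕ) (e : ℤ) : ℕ := ((i + e).toNat).choose i

theorem macaulayTerm_succ_succ {e : ℤ} (he : -1 ≤ e) (n : ℕ) :
    macaulayTerm (n + 1) (e + 1) = macaulayTerm n (e + 1) + macaulayTerm (n + 1) e := by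
  simp only [macaulayTerm]
  rw [show ((n + 1 : ℕ) + (e + 1) : ℤ).toNat = ((n + 1 : ℕ) + e : ℤ).toNat + 1 by omega,
    show ((n : ℕ) + (e + 1) : ℤ).toNat = ((n + 1 : ℕ) + e : ℤ).toNat by omega,
    Nat.choose_succ_succ]

theorem monotone_macaulayTerm (i : ℕ) : Monotone (macaulayTerm i) :=
  fun _ _ h => Nat.choose_le_choose i (by omega)

theorem sum_range_macaulayTerm {e : ℤ} (he : -1 ≤ e) (n : ℕ) :
    ∑ i ∈ range (n + 1), macaulayTerm i e = macaulayTerm n (e + 1) := by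
  induction n with
  | zero => simp [macaulayTerm]
  | succ n ih => rw [sum_range_succ, ih, macaulayTerm_succ_succ he]

theorem sum_Icc_macaulayTerm_add_one {e : ℤ} (he : -1 ≤ e) (n : ℕ) :
    ∑ i ∈ Icc 1 n, macaulayTerm i e + 1 = macaulayTerm n (e + 1) := by
  rw [← sum_range_macaulayTerm he, range_eq_Ico, sum_eq_sum_Ico_succ_bot n.succ_pos, zero_add,
    Nat.succ_eq_add_one, Ico_add_one_right_eq_Icc, add_comm]
  simp [macaulayTerm]

theorem sum_macaulayTerm_comp_le {e : ℤ} (he : -1 ≤ e) {s : Finset ℕ} {f : ℕ → ℕ} {n : ℕ}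
    (hf : Set.InjOn f s) (hfs : ∀ i ∈ s, f i ≤ n) :
    ∑ i ∈ s, macaulayTerm (f i) e ≤ macaulayTerm n (e + 1) := by
  rw [← sum_image (f := (macaulayTerm · e)) hf, ← sum_range_macaulayTerm he]
  refine sum_le_sum_of_subset fun j hj => ?_
  obtain ⟨i, hi, rfl⟩ := mem_image.mp hj
  exact mem_range_succ_iff.mpr (hfs i hi)

theorem sum_Icc_choose_succ_le {e : ℤ} (he : -1 ≤ e) (k : ℕ) :
    ∑ i ∈ Icc 1 k, ((i : ℤ) + e + 1).toNat.choose (i + 1) ≤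
      ((k : ℤ) + (e + 1) + 1).toNat.choose (k + 1) := by
  have h := sum_macaulayTerm_comp_le he (s := Icc 1 k) (f := (· + 1)) (n := k + 1)
    (add_left_injective 1).injOn (fun i hi => by simp_all)
  simp only [macaulayTerm, Nat.cast_add, Nat.cast_one] at h
  convert h using 2 <;> ring_nf

theorem sum_Icc_choose_sub_one_le {e : ℤ} (he : -1 ≤ e) (k : ℕ) :
    ∑ i ∈ Icc 1 k, ((i : ℤ) + e - 1).toNat.choose i ≤
      ((k : ℤ) + (e + 1) - 1).toNat.choose k := by
  rcases he.eq_or_lt with rfl | he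
  · rw [sum_eq_zero fun i hi => Nat.choose_eq_zero_of_lt (by grind)]
    exact Nat.zero_le _
  · have h := sum_macaulayTerm_comp_le (e := e - 1) (by omega) (s := Icc 1 k) (f := id) (n := k)
      (Set.injOn_id _) (fun i hi => by simp_all)
    simp only [macaulayTerm, id] at h
    convert h using 2 <;> ring_nf

theorem sum_Icc_choose_pred_le {e : ℤ} (he : -1 ≤ e) (k : ℕ) :
    ∑ i ∈ Icc 1 k, ((i : ℤ) + e - 1).toNat.choose (i - 1) ≤
      ((k : ℤ) + (e + 1) - 1).toNat.choose (k - 1) := by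
  have h := sum_macaulayTerm_comp_le he (s := Icc 1 k) (f := (· - 1)) (n := k - 1)
    (fun i hi j hj hij => by simp_all; omega) (fun i hi => by simp_all; omega)
  rcases k.eq_zero_or_pos with rfl | hk
  · simp
  refine (sum_congr rfl fun i hi => ?_).trans_le (h.trans_eq ?_) <;> simp only [macaulayTerm]
  · have := (mem_Icc.mp hi).1
    congr 2
    omega
  · congr 2
    omega

section Comparison

variable {d : ℕ} {ε ε' : ℕ → ℤ}

theorem exists_max_ne_of_not_eqOn (h : ¬ ∀ i ∈ Icc 1 d, ε i = ε' i) :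
    ∃ k ∈ Icc 1 d, ε k ≠ ε' k ∧ ∀ i ∈ Ioc k d, ε i = ε' i := by
  push Not at h
  obtain ⟨k, hk, hmax⟩ := ((Icc 1 d).filter fun i => ε i ≠ ε' i).exists_max_image id
    (by simpa [Finset.Nonempty] using h)
  simp only [mem_filter, mem_Icc, id] at hk hmax
  refine ⟨k, mem_Icc.mpr hk.1, hk.2, fun i hi => ?_⟩
  simp only [mem_Ioc] at hi
  by_contra hne
  have := hmax i ⟨⟨by omega, hi.2⟩, hne⟩
  omega

theorem sum_add_le_sum_of_lt_of_eq_above (g : ℕ → ℤ → ℕ) (hg : ∀ i, Monotone (g i)) {k δ : ℕ}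
    (hk : k ∈ Icc 1 d) (hε : ∀ i ∈ Icc 1 k, ε i ≤ ε k) (hlt : ε k < ε' k)
    (heq : ∀ i ∈ Ioc k d, ε i = ε' i)
    (hdom : ∑ i ∈ Icc 1 k, g i (ε k) + δ ≤ g k (ε k + 1)) :
    ∑ i ∈ Icc 1 d, g i (ε i) + δ ≤ ∑ i ∈ Icc 1 d, g i (ε' i) := by
  obtain ⟨hk1, hkd⟩ := mem_Icc.mp hk
  have hsplit (f : ℕ → ℕ) : ∑ i ∈ Icc 1 d, f i = ∑ i ∈ Icc 1 k, f i + ∑ i ∈ Ioc k d, f i := by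
    have hIcc (m : ℕ) : Icc 1 m = Ioc 0 m := Icc_add_one_left_eq_Ioc 0 m
    rw [hIcc, hIcc, sum_Ioc_consecutive f k.zero_le hkd]
  rw [hsplit, hsplit, sum_congr rfl fun i hi => congrArg (g i) (heq i hi), add_right_comm]
  gcongr ?_ + _
  calc ∑ i ∈ Icc 1 k, g i (ε i) + δ
      ≤ ∑ i ∈ Icc 1 k, g i (ε k) + δ := by gcongr with i hi; exact hg i (hε i hi)
    _ ≤ g k (ε k + 1) := hdom
    _ ≤ g k (ε' k) := hg k (by omega)
    _ ≤ ∑ i ∈ Icc 1 k, g i (ε' i) :=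
      single_le_sum (f := fun i => g i (ε' i)) (fun _ _ => Nat.zero_le _)
        (mem_Icc.mpr ⟨hk1, le_rfl⟩)

end Comparison

theorem sum_le_sum_of_isMacaulayExpansion (g : ℕ → ℤ → ℕ) (hg : ∀ i, Monotone (g i))
    (hdom : ∀ k (e : ℤ), -1 ≤ e → ∑ i ∈ Icc 1 k, g i e ≤ g k (e + 1))
    {c c' d : ℕ} {ε ε' : ℕ → ℤ} (hcc : c ≤ c')
    (hε : IsMacaulayExpansion c d ε) (hε' : IsMacaulayExpansion c' d ε') :
    ∑ i ∈ Icc 1 d, g i (ε i) ≤ ∑ i ∈ Icc 1 d, g i (ε' i) := by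
  obtain ⟨hb, hm, hc⟩ := hε
  obtain ⟨hb', hm', hc'⟩ := hε'
  by_cases hagree : ∀ i ∈ Icc 1 d, ε i = ε' i
  · exact (sum_congr rfl fun i hi => by rw [hagree i hi]).le
  obtain ⟨k, hk, hne, heq⟩ := exists_max_ne_of_not_eqOn hagree
  obtain ⟨hk1, hkd⟩ := mem_Icc.mp hk
  have hmono : ∀ i ∈ Icc 1 k, ε i ≤ ε k := fun i hi =>
    hm i k (mem_Icc.mp hi).1 (mem_Icc.mp hi).2 hkd
  have hlt : ε k < ε' k := by
    refine (lt_or_gt_of_ne hne).resolve_right fun hgt => ?_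
    have := sum_add_le_sum_of_lt_of_eq_above macaulayTerm monotone_macaulayTerm (δ := 1) hk
      (fun i hi => hm' i k (mem_Icc.mp hi).1 (mem_Icc.mp hi).2 hkd) hgt
      (fun i hi => (heq i hi).symm) (sum_Icc_macaulayTerm_add_one (hb' k hk1 hkd) k).le
    simp only [macaulayTerm] at this
    omega
  simpa using sum_add_le_sum_of_lt_of_eq_above g hg (δ := 0) hk hmono hlt heq
    (by simpa using hdom k _ (hb k hk1 hkd))

/-- The functions `c ↦ c^⟨d⟩`, `c ↦ c_⟨d⟩` and `c ↦ c_{*d}` defined via the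
Macaulay expansion of `c` in base `d` are increasing in `c`. -/
theorem macaulay_functions_monotone (d : ℕ) (hd : 1 ≤ d) (c c' : ℕ) (hcc : c ≤ c')
    (ε ε' : ℕ → ℤ)
    (hε : IsMacaulayExpansion c d ε) (hε' : IsMacaulayExpansion c' d ε') :
    (∑ i ∈ Finset.Icc 1 d, (((i : ℤ) + ε i + 1).toNat).choose (i + 1) ≤
      ∑ i ∈ Finset.Icc 1 d, (((i : ℤ) + ε' i + 1).toNat).choose (i + 1)) ∧
    (∑ i ∈ Finset.Icc 1 d, (((i : ℤ) + ε i - 1).toNat).choose i ≤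
      ∑ i ∈ Finset.Icc 1 d, (((i : ℤ) + ε' i - 1).toNat).choose i) ∧
    (∑ i ∈ Finset.Icc 2 d, (((i : ℤ) + ε i - 1).toNat).choose (i - 1) ≤
      ∑ i ∈ Finset.Icc 2 d, (((i : ℤ) + ε' i - 1).toNat).choose (i - 1)) := by
  refine ⟨sum_le_sum_of_isMacaulayExpansion (fun i e => ((i : ℤ) + e + 1).toNat.choose (i + 1))
      (fun i _ _ h => Nat.choose_le_choose _ (by omega))
      (fun k _ he => sum_Icc_choose_succ_le he k) hcc hε hε',
    sum_le_sum_of_isMacaulayExpansion (fun i e => ((i : ℤ) + e - 1).toNat.choose i)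
      (fun i _ _ h => Nat.choose_le_choose _ (by omega))
      (fun k _ he => sum_Icc_choose_sub_one_le he k) hcc hε hε', ?_⟩
  -- the extra `i = 1` term of the full sum is `choose _ 0 = 1` on both sides
  have h := sum_le_sum_of_isMacaulayExpansion (fun i e => ((i : ℤ) + e - 1).toNat.choose (i - 1))
    (fun i _ _ h => Nat.choose_le_choose _ (by omega))
    (fun k _ he => sum_Icc_choose_pred_le he k) hcc hε hε'
  rwa [← add_sum_Ioc_eq_sum_Icc hd, ← add_sum_Ioc_eq_sum_Icc hd, ← Icc_add_one_left_eq_Ioc,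
    Nat.sub_self, Nat.choose_zero_right, Nat.choose_zero_right, add_le_add_iff_left] at h
end

section
/- Let c ≥ 1 and let d_1 ≤ d_2 ≤ … ≤ d_c be integers with d_1 ≥ 2, and set D = Σ_{i=1}^c d_i. Define h: ℕ → ℕ by h(k) = Σ_{i=1}^c max(0, k + 1 − d_c + d_i) for 0 ≤ k ≤ d_c − 2, h(k) = D + d_c − c − 2 − k for d_c − 1 ≤ k ≤ D + d_c − c − 2, and h(k) = 0 for k ≥ D + d_c − c − 2. Then Σ_{k=0}^{D + d_c − c − 3} h(k) = Σ_{1 ≤ i ≤ j ≤ c} (d_i − 1)(d_j − 1). -/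
open Finset

lemma gaussZ (n : ℕ) : 2 * ∑ k ∈ range n, ((k:ℤ)+1) = n*(n+1) := by
  induction n with
  | zero => simp
  | succ n ih => rw [sum_range_succ, mul_add, ih]; push_cast; ring

lemma lemC (n e : ℕ) (he : e ≤ n) :
    ∑ k ∈ range n, max 0 ((k:ℤ)+1+e-n) = ∑ k ∈ range e, ((k:ℤ)+1) := by
  rw [range_eq_Ico, ← sum_Ico_consecutive _ (Nat.zero_le (n-e)) (Nat.sub_le n e)]
  have h1 : ∑ k ∈ Ico 0 (n-e), max 0 ((k:ℤ)+1+e-n) = 0 := by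
    apply sum_eq_zero
    intro k hk
    simp only [mem_Ico] at hk
    have := hk.2
    have : (k:ℤ) + 1 + e - n ≤ 0 := by omega
    simp [max_eq_left this]
  rw [h1, zero_add, sum_Ico_eq_sum_range]
  apply sum_congr (by rw [Nat.sub_sub_self he, range_eq_Ico])
  intro k hk
  simp only [mem_range] at hk
  have h2 : ((n - e + k : ℕ) : ℤ) = (n:ℤ) - e + k := by omega
  rw [h2]
  have : (0:ℤ) ≤ (k:ℤ) + 1 := by positivity
  omega

lemma lemE (L : ℕ) : ∑ j ∈ range L, ((L:ℤ) - j) = ∑ j ∈ range L, ((j:ℤ)+1) := by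
  rw [← Finset.sum_range_reflect (fun j => ((j:ℤ)+1)) L]
  apply sum_congr rfl
  intro j hj
  simp only [mem_range] at hj
  have : ((L - 1 - j : ℕ) : ℤ) = (L:ℤ) - 1 - j := by omega
  rw [this]; ring

lemma lemD (c : ℕ) (a : Fin c → ℤ) :
    2 * ∑ j : Fin c, ∑ i ∈ Iic j, a i * a j =
      (∑ i : Fin c, a i)^2 + ∑ i : Fin c, (a i)^2 := by
  have key : ∀ j : Fin c, ∑ i ∈ Iic j, a i * a j =
      ∑ i : Fin c, if i ≤ j then a i * a j else 0 := by
    intro j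
    rw [← Finset.sum_filter]
    congr 1
    ext i
    simp
  simp_rw [key]
  rw [two_mul]
  nth_rewrite 2 [Finset.sum_comm]
  rw [← sum_add_distrib]
  simp_rw [← sum_add_distrib]
  have : ∀ j i : Fin c, ((if i ≤ j then a i * a j else 0) + (if j ≤ i then a j * a i else 0))
      = a i * a j + (if i = j then a i * a j else 0) := by
    intro j i
    rcases lt_trichotomy i j with hlt | heq | hgt
    · rw [if_pos hlt.le, if_neg (not_le.2 hlt), if_neg hlt.ne]
    · subst heq; simp
    · rw [if_neg (not_le.2 hgt), if_pos hgt.le, if_neg hgt.ne']; ring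
  simp_rw [this, Finset.sum_add_distrib]
  congr 1
  · simp_rw [← Finset.sum_mul]
    rw [← Finset.mul_sum, pow_two]
  · simp [Finset.sum_ite_eq', pow_two]

/-- The sum of the Hilbert function `h = h_{V_L}` of the module occurring when a
general hyperplane section contains a line equals `∑_{i ≤ j} (d_i-1)(d_j-1)`:
for integers `2 ≤ d_1 ≤ … ≤ d_c` and `D = ∑ d_i`, if
`h(k) = ∑_i max(0, k+1-d_c+d_i)` for `0 ≤ k ≤ d_c-2`,
`h(k) = D+d_c-c-2-k` for `d_c-1 ≤ k ≤ D+d_c-c-2`, and `h(k) = 0` for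
`k ≥ D+d_c-c-2`, then `∑_{k=0}^{D+d_c-c-3} h(k) = ∑_{i ≤ j} (d_i-1)(d_j-1)`. -/
theorem sum_hilbert_fn_line_module (c : ℕ) (hc : 1 ≤ c)
    (d : Fin c → ℤ) (hmono : Monotone d) (hd2 : 2 ≤ d ⟨0, by omega⟩)
    (D : ℤ) (hD : D = ∑ i : Fin c, d i)
    (dc : ℤ) (hdc : dc = d ⟨c - 1, by omega⟩)
    (h : ℕ → ℤ)
    (h1 : ∀ k : ℕ, (k : ℤ) ≤ dc - 2 →
      h k = ∑ i : Fin c, max 0 ((k : ℤ) + 1 - dc + d i))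
    (h2 : ∀ k : ℕ, dc - 1 ≤ (k : ℤ) → (k : ℤ) ≤ D + dc - c - 2 →
      h k = D + dc - c - 2 - k)
    (h3 : ∀ k : ℕ, D + dc - c - 2 ≤ (k : ℤ) → h k = 0) :
    ∑ k ∈ Finset.range (D + dc - c - 2).toNat, h k =
      ∑ j : Fin c, ∑ i ∈ Finset.Iic j, (d i - 1) * (d j - 1) := by
  have hd2' : ∀ i : Fin c, 2 ≤ d i := by
    intro i
    refine le_trans hd2 (hmono ?_)
    rw [Fin.le_def]
    exact Nat.zero_le _
  have hdle : ∀ i : Fin c, d i ≤ dc := by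
    intro i
    rw [hdc]
    refine hmono ?_
    rw [Fin.le_def]
    have := i.isLt
    simp
    omega
  have hdcge : 2 ≤ dc := le_trans (hd2' ⟨c-1, by omega⟩) (le_of_eq hdc.symm)
  have hDge : 2 * (c:ℤ) ≤ D := by
    rw [hD]
    calc 2 * (c:ℤ) = ∑ _i : Fin c, (2:ℤ) := by simp [mul_comm]
    _ ≤ ∑ i : Fin c, d i := Finset.sum_le_sum (fun i _ => hd2' i)
  set M : ℕ := (dc - 1).toNat with hM
  set Nn : ℕ := (D + dc - c - 2).toNat with hN
  set L : ℕ := (D - (c:ℤ) - 1).toNat with hL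
  have hcge1 : (1:ℤ) ≤ (c:ℤ) := by exact_mod_cast hc
  have hMN : M ≤ Nn := by omega
  rw [Finset.range_eq_Ico, ← Finset.sum_Ico_consecutive h (Nat.zero_le M) hMN]
  have hA : ∑ k ∈ Finset.Ico 0 M, h k
      = ∑ i : Fin c, ∑ k ∈ Finset.range ((d i - 1).toNat), ((k:ℤ)+1) := by
    rw [← Finset.range_eq_Ico]
    rw [Finset.sum_congr rfl (fun k hk => h1 k (by
      simp only [Finset.mem_range] at hk; omega))]
    rw [Finset.sum_comm]
    apply Finset.sum_congr rfl
    intro i _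
    have he : (d i - 1).toNat ≤ M := by have := hdle i; have := hd2' i; omega
    rw [← lemC M (d i - 1).toNat he]
    apply Finset.sum_congr rfl
    intro k _
    congr 1
    have := hd2' i
    omega
  have hB : ∑ k ∈ Finset.Ico M Nn, h k = ∑ j ∈ Finset.range L, ((j:ℤ)+1) := by
    rw [Finset.sum_Ico_eq_sum_range]
    have hNML : Nn - M = L := by omega
    rw [hNML, ← lemE L]
    apply Finset.sum_congr rfl
    intro j hj
    simp only [Finset.mem_range] at hj
    rw [h2 (M + j) (by push_cast; omega) (by push_cast; omega)]
    push_cast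
    omega
  rw [hA, hB]
  have h2inj : ∀ x y : ℤ, 2 * x = 2 * y → x = y := fun x y hxy => by omega
  apply h2inj
  rw [mul_add, Finset.mul_sum]
  simp_rw [gaussZ]
  rw [lemD c (fun i => d i - 1)]
  have hcast : ∀ i : Fin c, (((d i - 1).toNat : ℤ)) = d i - 1 := by
    intro i
    have := hd2' i
    omega
  simp only [hcast]
  have hLc : ((L:ℕ) : ℤ) = D - c - 1 := by omega
  rw [hLc]
  have hE : ∑ i : Fin c, (d i - 1) = D - (c:ℤ) := by
    rw [Finset.sum_sub_distrib, ← hD]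
    simp
  have hsq : ∑ i : Fin c, (d i - 1) * ((d i - 1) + 1)
      = (∑ i : Fin c, (d i - 1)^2) + ∑ i : Fin c, (d i - 1) := by
    rw [← Finset.sum_add_distrib]
    apply Finset.sum_congr rfl
    intros
    ring
  rw [hsq, hE]
  ring
end

section
/- Let S = ℂ[x_0, …, x_n], let d ≥ 4 be an integer, and let I ⊆ S be a proper homogeneous ideal whose Hilbert function satisfies the symmetry h_I(k) = h_I(3d − 5 − k) for all integers k with 0 ≤ k ≤ 3d − 5, and satisfies h_I(d−1) ≥ 2d − 1. Then Σ_{k=0}^{3d−5} h_I(k) > 3(d−1)^2. -/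
open MvPolynomial

/-!
The Hilbert function of a homogeneous ideal obeys Macaulay's bound `h (k + 1) ≤ h k ^ ⟨k⟩`
in the range `h k ≤ 2 k`. This is proved by induction on the number of variables: for a
variable `x`, the exact sequence `0 → (W : x)_k → W_{k+1} → (W|_{x = 0})_{k+1} → 0` splits
`h (k + 1)` into the Hilbert function of an ideal in one variable less at `k + 1` plus that of
the colon ideal at `k`, and the two bounds add up.

Once `h (d - 1) ≥ 2 d - 1`, the bound forces `h m ≥ 2 m + 1` for `m ≤ d - 1` (from `m` on, `h`
could grow by at most one per step), and by symmetry `h (2 d - 4) ≥ 2 d - 1` forces `h k ≥ k + 3`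
for `d ≤ k ≤ 2 d - 5`. With the symmetry for the last `d` terms, the sum is at least
`2 d ^ 2 + (d - 4) (d + 3) > 3 (d - 1) ^ 2`.
-/

open Module

theorem Submodule.finrank_map_add_finrank_inf_ker {K V V₂ : Type*} [DivisionRing K]
    [AddCommGroup V] [Module K V] [AddCommGroup V₂] [Module K V₂] (f : V →ₗ[K] V₂)
    (U : Submodule K V) [FiniteDimensional K U] :
    finrank K (U.map f) + finrank K (U ⊓ LinearMap.ker f : Submodule K V) = finrank K U := by
  have := (f.domRestrict U).finrank_range_add_finrank_ker
  rwa [LinearMap.range_domRestrict, LinearMap.ker_domRestrict,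
    (Submodule.equivMapOfInjective _ U.injective_subtype _).finrank_eq,
    Submodule.map_comap_subtype] at this

theorem Finsupp.finite_setOf_support_subset_degree_eq {σ : Type*} (T : Finset σ) (j : ℕ) :
    {d : σ →₀ ℕ | d.support ⊆ T ∧ d.degree = j}.Finite := by
  classical
  refine (Finset.finsuppAntidiag T j).finite_toSet.subset fun d ⟨hd, hdeg⟩ => ?_
  rw [Finset.mem_coe, Finset.mem_finsuppAntidiag, ← hdeg, Finsupp.degree_apply]
  exact ⟨(Finset.sum_subset hd fun i _ hi => Finsupp.notMem_support_iff.mp hi).symm, hd⟩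

namespace MvPolynomial

section Ring

variable {σ R : Type*} [CommRing R]

variable (R) in
noncomputable def homogeneousIn (T : Finset σ) (j : ℕ) : Submodule R (MvPolynomial σ R) :=
  restrictSupport R {d | d.support ⊆ T ∧ d.degree = j}

variable {T T' : Finset σ} {j : ℕ}

theorem homogeneousIn_le_iff {P : Submodule R (MvPolynomial σ R)} :
    homogeneousIn R T j ≤ P ↔
      ∀ d : σ →₀ ℕ, d.support ⊆ T → d.degree = j → monomial d 1 ∈ P := by
  rw [homogeneousIn, restrictSupport_eq_span, Submodule.span_le, Set.image_subset_iff]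
  exact ⟨fun h d hd hdeg => h ⟨hd, hdeg⟩, fun h d hd => h d hd.1 hd.2⟩

theorem monomial_mem_homogeneousIn {d : σ →₀ ℕ} (hd : d.support ⊆ T) (hdeg : d.degree = j)
    (c : R) : monomial d c ∈ homogeneousIn R T j := by
  simp [homogeneousIn, hd, hdeg]

theorem homogeneousIn_mono (h : T ⊆ T') (j : ℕ) :
    homogeneousIn R T j ≤ homogeneousIn R T' j :=
  restrictSupport_mono _ fun _ ⟨hd, hdeg⟩ => ⟨hd.trans h, hdeg⟩

theorem homogeneousIn_univ [Fintype σ] (j : ℕ) :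
    homogeneousIn R (Finset.univ : Finset σ) j = homogeneousSubmodule σ R j := by
  rw [homogeneousSubmodule_eq_finsupp_supported, homogeneousIn]
  congr
  ext d
  simp

theorem homogeneousIn_empty_succ (j : ℕ) : homogeneousIn R (∅ : Finset σ) (j + 1) = ⊥ := by
  rw [eq_bot_iff, homogeneousIn_le_iff]
  intro d hd hdeg
  rw [Finsupp.support_eq_empty.mp (Finset.subset_empty.mp hd), map_zero] at hdeg
  omega

theorem monomial_eq_X_mul_monomial {d : σ →₀ ℕ} {x : σ} (hx : d x ≠ 0) (c : R) :
    monomial d c = X x * monomial (d - Finsupp.single x 1) c := by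
  rw [X, monomial_mul, one_mul, add_tsub_cancel_of_le (Finsupp.single_le_iff.mpr (by omega))]

theorem X_mul_mem_homogeneousIn {i : σ} (hi : i ∈ T) {p : MvPolynomial σ R}
    (hp : p ∈ homogeneousIn R T j) : X i * p ∈ homogeneousIn R T (j + 1) := by
  classical
  revert p
  change homogeneousIn R T j ≤ (homogeneousIn R T (j + 1)).comap (LinearMap.mulLeft R (X i))
  rw [homogeneousIn_le_iff]
  intro d hd hdeg
  rw [Submodule.mem_comap, LinearMap.mulLeft_apply, X, monomial_mul]
  refine monomial_mem_homogeneousIn ?_ (by simp [hdeg, add_comm]) _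
  refine Finsupp.support_add.trans (Finset.union_subset ?_ hd)
  exact Finsupp.support_single_subset.trans (Finset.singleton_subset_iff.mpr hi)

theorem exists_X_mul_of_mem_support {d : σ →₀ ℕ} (hd : d.support ⊆ T)
    (hdeg : d.degree = j + 1) {x : σ} (hx : d x ≠ 0) (c : R) :
    ∃ q ∈ homogeneousIn R T j, monomial d c = X x * q := by
  refine ⟨_, monomial_mem_homogeneousIn (Finsupp.support_tsub.trans hd) ?_ c,
    monomial_eq_X_mul_monomial hx c⟩
  have := congrArg Finsupp.degree (tsub_add_cancel_of_le (Finsupp.single_le_iff.mpr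
    (Nat.one_le_iff_ne_zero.mpr hx)))
  rw [map_add, Finsupp.degree_single] at this
  omega

section killVar

variable [DecidableEq σ]

noncomputable def killVar (x : σ) : MvPolynomial σ R →ₐ[R] MvPolynomial σ R :=
  aeval (Function.update X x 0)

theorem killVar_X_mul (x : σ) (p : MvPolynomial σ R) : killVar x (X x * p) = 0 := by
  simp [killVar]

theorem killVar_X_of_ne {x i : σ} (h : i ≠ x) : killVar x (X i : MvPolynomial σ R) = X i := by
  simp [killVar, h]

theorem killVar_monomial_of_eq_zero {x : σ} {d : σ →₀ ℕ} (hd : d x = 0) (c : R) :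
    killVar x (monomial d c) = monomial d c := by
  rw [killVar, aeval_monomial, monomial_eq, algebraMap_eq]
  congr 1
  refine Finsupp.prod_congr fun i hi => ?_
  rw [Function.update_of_ne (by rintro rfl; exact Finsupp.mem_support_iff.mp hi hd)]

theorem killVar_monomial_of_ne_zero {x : σ} {d : σ →₀ ℕ} (hd : d x ≠ 0) (c : R) :
    killVar x (monomial d c) = 0 := by
  rw [monomial_eq_X_mul_monomial hd, killVar_X_mul]

theorem killVar_mem_homogeneousIn {x : σ} {p : MvPolynomial σ R}
    (hp : p ∈ homogeneousIn R T j) :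
    killVar x p ∈ homogeneousIn R (T.erase x) j := by
  revert p
  change homogeneousIn R T j ≤ (homogeneousIn R (T.erase x) j).comap (killVar x).toLinearMap
  rw [homogeneousIn_le_iff]
  intro d hd hdeg
  rw [Submodule.mem_comap, AlgHom.toLinearMap_apply]
  by_cases hx : d x = 0
  · rw [killVar_monomial_of_eq_zero hx]
    refine monomial_mem_homogeneousIn (fun i hi => Finset.mem_erase.mpr ⟨?_, hd hi⟩) hdeg _
    rintro rfl
    exact Finsupp.mem_support_iff.mp hi hx
  · rw [killVar_monomial_of_ne_zero hx]
    exact zero_mem _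

theorem killVar_eq_self {x : σ} {p : MvPolynomial σ R}
    (hp : p ∈ homogeneousIn R (T.erase x) j) :
    killVar x p = p := by
  revert p
  change _ ≤ LinearMap.eqLocus (killVar x).toLinearMap LinearMap.id
  rw [homogeneousIn_le_iff]
  intro d hd _
  refine killVar_monomial_of_eq_zero (Finsupp.notMem_support_iff.mp fun hx => ?_) 1
  exact (Finset.mem_erase.mp (hd hx)).1 rfl

theorem sub_killVar_mem_map_X_mul {x : σ} {p : MvPolynomial σ R}
    (hp : p ∈ homogeneousIn R T (j + 1)) :
    p - killVar x p ∈ (homogeneousIn R T j).map (LinearMap.mulLeft R (X x)) := by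
  revert p
  change homogeneousIn R T (j + 1) ≤ Submodule.comap (LinearMap.id - (killVar x).toLinearMap)
    ((homogeneousIn R T j).map (LinearMap.mulLeft R (X x)))
  rw [homogeneousIn_le_iff]
  intro d hd hdeg
  rw [Submodule.mem_comap, LinearMap.sub_apply, LinearMap.id_apply, AlgHom.toLinearMap_apply]
  by_cases hx : d x = 0
  · rw [killVar_monomial_of_eq_zero hx, sub_self]
    exact zero_mem _
  · obtain ⟨q, hq, hdq⟩ := exists_X_mul_of_mem_support hd hdeg hx (1 : R)
    rw [killVar_monomial_of_ne_zero hx, sub_zero, hdq]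
    exact ⟨q, hq, rfl⟩

end killVar

end Ring

section Field

variable {σ K : Type*} [Field K]

instance (T : Finset σ) (j : ℕ) : FiniteDimensional K (homogeneousIn K T j) := by
  rw [homogeneousIn, restrictSupport_eq_span]
  exact FiniteDimensional.span_of_finite K
    ((Finsupp.finite_setOf_support_subset_degree_eq T j).image _)

variable (K) in
/-- A homogeneous ideal of `K[x_i | i ∈ T]`, given by its graded pieces inside
`MvPolynomial σ K`; the variables outside `T` are never used. -/
structure GradedIdeal (T : Finset σ) where
  piece : ℕ → Submodule K (MvPolynomial σ K)
  piece_le : ∀ j, piece j ≤ homogeneousIn K T j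
  X_mul_mem : ∀ i ∈ T, ∀ {j f}, f ∈ piece j → X i * f ∈ piece (j + 1)

namespace GradedIdeal

variable {T : Finset σ} (W : GradedIdeal K T)

instance (j : ℕ) : FiniteDimensional K (W.piece j) :=
  Submodule.finiteDimensional_of_le (W.piece_le j)

noncomputable def hilbertFn (j : ℕ) : ℕ :=
  finrank K (homogeneousIn K T j) - finrank K (W.piece j)

theorem finrank_piece_le (j : ℕ) : finrank K (W.piece j) ≤ finrank K (homogeneousIn K T j) :=
  Submodule.finrank_mono (W.piece_le j)

theorem hilbertFn_le_of_le {W' : GradedIdeal K T} {j : ℕ} (h : W.piece j ≤ W'.piece j) :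
    W'.hilbertFn j ≤ W.hilbertFn j := by
  have := Submodule.finrank_mono h
  unfold hilbertFn
  omega

theorem homogeneousIn_succ_le {j : ℕ} (h : homogeneousIn K T j ≤ W.piece j) :
    homogeneousIn K T (j + 1) ≤ W.piece (j + 1) := by
  classical
  rw [homogeneousIn_le_iff]
  intro d hd hdeg
  obtain ⟨x, hx⟩ : d.support.Nonempty := by
    rw [Finsupp.support_nonempty_iff]
    rintro rfl
    simp at hdeg
  obtain ⟨q, hq, hdq⟩ :=
    exists_X_mul_of_mem_support hd hdeg (Finsupp.mem_support_iff.mp hx) (1 : K)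
  rw [hdq]
  exact W.X_mul_mem x (hd hx) (h hq)

theorem hilbertFn_succ_eq_zero {j : ℕ} (h : W.hilbertFn j = 0) : W.hilbertFn (j + 1) = 0 := by
  have hj : homogeneousIn K T j ≤ W.piece j :=
    (Submodule.eq_of_le_of_finrank_le (W.piece_le j) (by unfold hilbertFn at h; omega)).ge
  have := Submodule.finrank_mono (W.homogeneousIn_succ_le hj)
  unfold hilbertFn
  omega

theorem hilbertFn_succ_of_empty (W : GradedIdeal K (∅ : Finset σ)) (j : ℕ) :
    W.hilbertFn (j + 1) = 0 := by
  unfold hilbertFn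
  rw [homogeneousIn_empty_succ, finrank_bot, zero_tsub]

variable (K T) in
noncomputable def top : GradedIdeal K T where
  piece := homogeneousIn K T
  piece_le _ := le_rfl
  X_mul_mem _ hi _ _ hf := X_mul_mem_homogeneousIn hi hf

noncomputable def colon (x : σ) : GradedIdeal K T where
  piece j := (W.piece (j + 1)).comap (LinearMap.mulLeft K (X x)) ⊓ homogeneousIn K T j
  piece_le _ := inf_le_right
  X_mul_mem i hi j f := by
    rintro ⟨hxf, hf⟩
    refine ⟨?_, X_mul_mem_homogeneousIn hi hf⟩
    simpa [mul_left_comm] using W.X_mul_mem i hi hxf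

theorem piece_le_colon {x : σ} (hx : x ∈ T) (j : ℕ) : W.piece j ≤ (W.colon x).piece j :=
  fun _ hf => ⟨W.X_mul_mem x hx hf, W.piece_le j hf⟩

theorem top_colon_piece {x : σ} (hx : x ∈ T) (j : ℕ) :
    ((top K T).colon x).piece j = homogeneousIn K T j :=
  le_antisymm (piece_le _ j) ((top K T).piece_le_colon hx j)

variable [DecidableEq σ]

noncomputable def image (x : σ) : GradedIdeal K (T.erase x) where
  piece j := (W.piece j).map (killVar x).toLinearMap
  piece_le j := by
    rintro _ ⟨p, hp, rfl⟩
    exact killVar_mem_homogeneousIn (W.piece_le j hp)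
  X_mul_mem i hi j := by
    rintro _ ⟨p, hp, rfl⟩
    refine ⟨X i * p, W.X_mul_mem i (Finset.mem_of_mem_erase hi) hp, ?_⟩
    simp [killVar_X_of_ne (Finset.ne_of_mem_erase hi)]

theorem piece_inf_ker_killVar {x : σ} (j : ℕ) :
    W.piece (j + 1) ⊓ LinearMap.ker (killVar x).toLinearMap =
      ((W.colon x).piece j).map (LinearMap.mulLeft K (X x)) := by
  apply le_antisymm
  · rintro p ⟨hpW, hp0 : killVar x p = 0⟩
    obtain ⟨q, hq, hpq⟩ := sub_killVar_mem_map_X_mul (x := x) (W.piece_le (j + 1) hpW)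
    rw [hp0, sub_zero] at hpq
    exact ⟨q, ⟨by simpa [hpq] using hpW, hq⟩, hpq⟩
  · rintro _ ⟨q, ⟨hq, -⟩, rfl⟩
    exact ⟨hq, killVar_X_mul x q⟩

theorem finrank_piece_succ {x : σ} (j : ℕ) :
    finrank K (W.piece (j + 1)) =
      finrank K ((W.image x).piece (j + 1)) + finrank K ((W.colon x).piece j) := by
  rw [← Submodule.finrank_map_add_finrank_inf_ker (killVar x).toLinearMap, piece_inf_ker_killVar,
    ← (Submodule.equivMapOfInjective (LinearMap.mulLeft K (X x))
      (mul_right_injective₀ (X_ne_zero x)) _).finrank_eq]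
  rfl

theorem top_image_piece {x : σ} (j : ℕ) :
    ((top K T).image x).piece j = homogeneousIn K (T.erase x) j := by
  refine le_antisymm (piece_le _ j) fun p hp => ⟨p, ?_, killVar_eq_self hp⟩
  exact homogeneousIn_mono (Finset.erase_subset x T) j hp

theorem hilbertFn_succ {x : σ} (hx : x ∈ T) (j : ℕ) :
    W.hilbertFn (j + 1) = (W.image x).hilbertFn (j + 1) + (W.colon x).hilbertFn j := by
  have hS := (top K T).finrank_piece_succ (x := x) j
  rw [top_image_piece, top_colon_piece hx] at hS
  have := W.finrank_piece_succ (x := x) j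
  have := (W.image x).finrank_piece_le (j + 1)
  have := (W.colon x).finrank_piece_le j
  unfold hilbertFn
  change finrank K (homogeneousIn K T (j + 1)) = _ at hS
  omega

end GradedIdeal

end Field

end MvPolynomial

/-- Macaulay's bound `c' ≤ c ^ ⟨k⟩` for `c ≤ 2 k`, where the `k`-th Macaulay representation
gives `c ^ ⟨k⟩ = c` for `c ≤ k` and `c ^ ⟨k⟩ = c + 1` for `k < c ≤ 2 k`. -/
def MacaulayBound (k c c' : ℕ) : Prop :=
  (c ≤ k → c' ≤ c) ∧ (c ≤ 2 * k → 1 ≤ k → c' ≤ c + 1)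

theorem macaulayBound_zero_right (k c : ℕ) : MacaulayBound k c 0 :=
  ⟨fun _ => Nat.zero_le _, fun _ _ => Nat.zero_le _⟩

theorem MacaulayBound.add {k a b a' b' : ℕ} (ha : MacaulayBound (k + 1) a a')
    (hb : MacaulayBound k b b') (hb' : b' ≤ a + b) :
    MacaulayBound (k + 1) (a + b) (a' + b') := by
  obtain ⟨ha₁, ha₂⟩ := ha
  obtain ⟨hb₁, hb₂⟩ := hb
  refine ⟨fun h => ?_, fun h _ => ?_⟩
  · have := ha₁ (by omega)
    rcases Nat.eq_zero_or_pos a with rfl | ha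
    · omega
    · have := hb₁ (by omega)
      omega
  · rcases le_or_gt a 1 with ha | ha
    · have := ha₁ (by omega)
      omega
    rcases le_or_gt a (k + 1) with ha' | ha'
    · have := ha₁ ha'
      have := hb₂ (by omega) (by omega)
      omega
    · have := ha₂ (by omega) (by omega)
      have := hb₁ (by omega)
      omega

namespace MvPolynomial.GradedIdeal

variable {σ K : Type*} [Field K]

theorem macaulayBound_hilbertFn {T : Finset σ} (W : GradedIdeal K T) (k : ℕ) :
    MacaulayBound k (W.hilbertFn k) (W.hilbertFn (k + 1)) := by
  classical
  induction T using Finset.strongInduction generalizing k with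
  | H T ih =>
    rcases T.eq_empty_or_nonempty with rfl | ⟨x, hx⟩
    · rw [hilbertFn_succ_of_empty]
      exact macaulayBound_zero_right _ _
    induction k generalizing W with
    | zero =>
      exact ⟨fun h => (W.hilbertFn_succ_eq_zero (by omega)).le.trans (Nat.zero_le _), by omega⟩
    | succ k ihk =>
      have hcolon : (W.colon x).hilbertFn (k + 1) ≤ W.hilbertFn (k + 1) :=
        W.hilbertFn_le_of_le (W.piece_le_colon hx _)
      rw [W.hilbertFn_succ hx] at hcolon ⊢
      rw [W.hilbertFn_succ hx]
      exact (ih _ (Finset.erase_ssubset hx) (W.image x) (k + 1)).add (ihk (W.colon x)) hcolon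

noncomputable def ofIdeal [Fintype σ] (I : Ideal (MvPolynomial σ K)) :
    GradedIdeal K (Finset.univ : Finset σ) where
  piece j := I.restrictScalars K ⊓ homogeneousSubmodule σ K j
  piece_le j := by
    rw [homogeneousIn_univ]
    exact inf_le_right
  X_mul_mem i _ j f := fun ⟨hfI, hf⟩ =>
    ⟨I.mul_mem_left (X i) hfI, by simpa [add_comm] using (isHomogeneous_X K i).mul hf⟩

end MvPolynomial.GradedIdeal

theorem hilbertFn_eq_ofIdeal {n : ℕ} (I : Ideal (MvPolynomial (Fin (n + 1)) ℂ)) (k : ℕ) :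
    hilbertFn I k = (GradedIdeal.ofIdeal I).hilbertFn k := by
  rw [hilbertFn, GradedIdeal.hilbertFn, homogeneousIn_univ]
  rfl

theorem macaulayBound_hilbertFn {n : ℕ} (I : Ideal (MvPolynomial (Fin (n + 1)) ℂ)) (k : ℕ) :
    MacaulayBound k (hilbertFn I k) (hilbertFn I (k + 1)) := by
  simpa only [hilbertFn_eq_ofIdeal] using (GradedIdeal.ofIdeal I).macaulayBound_hilbertFn k

theorem Finset.sum_range_two_mul_add_one (d : ℕ) :
    ∑ k ∈ Finset.range d, (2 * k + 1) = d ^ 2 := by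
  induction d with
  | zero => simp
  | succ d ih =>
    rw [Finset.sum_range_succ, ih]
    ring

section NumericalBound

variable {h : ℕ → ℕ} (hmac : ∀ k, MacaulayBound k (h k) (h (k + 1)))
include hmac

theorem le_add_of_macaulayBound {m a : ℕ} (hm : 1 ≤ m) (ha : a ≤ m) (hh : h m ≤ m + a)
    (t : ℕ) : h (m + t) ≤ m + a + t := by
  induction t with
  | zero => simpa using hh
  | succ t ih =>
    have := (hmac (m + t)).2 (by omega) (by omega)
    rw [← add_assoc]
    omega

theorem lt_of_macaulayBound {m a N : ℕ} (hm : 1 ≤ m) (ha : a ≤ m) (hmN : m ≤ N)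
    (hN : N + a < h N) : m + a < h m := by
  by_contra! hh
  have := le_add_of_macaulayBound hmac hm ha hh (N - m)
  rw [Nat.add_sub_cancel' hmN] at this
  omega

theorem two_mul_lt_of_macaulayBound {m N : ℕ} (hN1 : 1 ≤ N) (hmN : m ≤ N) (hN : 2 * N < h N) :
    2 * m < h m := by
  have of_pos : ∀ m, 1 ≤ m → m ≤ N → 2 * m < h m := fun m hm hmN => by
    simpa [two_mul] using lt_of_macaulayBound hmac hm le_rfl hmN (by omega)
  rcases Nat.eq_zero_or_pos m with rfl | hm
  · by_contra! h0
    have h1 : h 1 ≤ h 0 := (hmac 0).1 (by omega)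
    have := of_pos 1 le_rfl hN1
    omega
  · exact of_pos m hm hmN

theorem sum_gt_of_macaulayBound {d : ℕ} (hd : 4 ≤ d)
    (hsym : ∀ k, k ≤ 3 * d - 5 → h k = h (3 * d - 5 - k)) (hbig : h (d - 1) ≥ 2 * d - 1) :
    ∑ k ∈ Finset.range (3 * d - 4), h k > 3 * (d - 1) ^ 2 := by
  have hfirst : d ^ 2 ≤ ∑ k ∈ Finset.range d, h k := by
    rw [← Finset.sum_range_two_mul_add_one]
    refine Finset.sum_le_sum fun k hk => ?_
    have := Finset.mem_range.mp hk
    exact two_mul_lt_of_macaulayBound hmac (N := d - 1) (by omega) (by omega) (by omega)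
  have hmiddle : (d - 4) * (d + 3) ≤ ∑ k ∈ Finset.Ico d (2 * d - 4), h k := by
    have hh : 2 * d - 1 ≤ h (2 * d - 4) := by
      rw [show 2 * d - 4 = 3 * d - 5 - (d - 1) by omega, ← hsym _ (by omega)]
      exact hbig
    have := Finset.card_nsmul_le_sum (Finset.Ico d (2 * d - 4)) h (d + 3) fun k hk => by
      obtain ⟨hk1, hk2⟩ := Finset.mem_Ico.mp hk
      have := lt_of_macaulayBound hmac (a := 2) (by omega) (by omega) (by omega : k ≤ 2 * d - 4)
        (by omega)
      omega
    rwa [smul_eq_mul, Nat.card_Ico, show 2 * d - 4 - d = d - 4 by omega] at this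
  have hlast :
      ∑ k ∈ Finset.Ico (2 * d - 4) (3 * d - 4), h k = ∑ k ∈ Finset.range d, h k := by
    rw [Finset.sum_Ico_eq_sum_range, show 3 * d - 4 - (2 * d - 4) = d by omega,
      ← Finset.sum_range_reflect]
    refine Finset.sum_congr rfl fun k hk => ?_
    have hk := Finset.mem_range.mp hk
    rw [hsym k (by omega), show 2 * d - 4 + (d - 1 - k) = 3 * d - 5 - k by omega]
  rw [← Finset.sum_range_add_sum_Ico _ (by omega : 2 * d - 4 ≤ 3 * d - 4),
    ← Finset.sum_range_add_sum_Ico _ (by omega : d ≤ 2 * d - 4), hlast]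
  obtain ⟨f, rfl⟩ : ∃ f, d = f + 4 := ⟨d - 4, by omega⟩
  simp only [show f + 4 - 4 = f by omega, show f + 4 - 1 = f + 3 by omega] at hmiddle ⊢
  nlinarith

end NumericalBound

theorem sum_hilbert_fn_gt_of_symmetric_general (n d : ℕ) (hd : 4 ≤ d)
    (I : Ideal (MvPolynomial (Fin (n + 1)) ℂ))
    (hsym : ∀ k : ℕ, k ≤ 3 * d - 5 → hilbertFn I k = hilbertFn I (3 * d - 5 - k))
    (hbig : hilbertFn I (d - 1) ≥ 2 * d - 1) :
    ∑ k ∈ Finset.range (3 * d - 4), hilbertFn I k > 3 * (d - 1) ^ 2 :=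
  sum_gt_of_macaulayBound (macaulayBound_hilbertFn I) hd hsym hbig

/-- If `d ≥ 4` and `I` is a proper homogeneous ideal of `ℂ[x_0,…,x_n]` whose
Hilbert function satisfies the Gorenstein symmetry `h_I(k) = h_I(3d-5-k)` for
`0 ≤ k ≤ 3d-5` and `h_I(d-1) ≥ 2d-1`, then `∑_{k=0}^{3d-5} h_I(k) > 3(d-1)²`. -/
theorem sum_hilbert_fn_gt_of_symmetric (n d : ℕ) (hd : 4 ≤ d)
    (I : Ideal (MvPolynomial (Fin (n + 1)) ℂ)) (hI : IsHomogeneousIdeal I)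
    (hproper : I ≠ ⊤)
    (hsym : ∀ k : ℕ, k ≤ 3 * d - 5 → hilbertFn I k = hilbertFn I (3 * d - 5 - k))
    (hbig : hilbertFn I (d - 1) ≥ 2 * d - 1) :
    ∑ k ∈ Finset.range (3 * d - 4), hilbertFn I k > 3 * (d - 1) ^ 2 :=
  sum_hilbert_fn_gt_of_symmetric_general n d hd I hsym hbig
end
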